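/- arXiv:2510.12570 — 4 statements merged into one kernel-verified Lean document; each statement's English description precedes it below -/
import Mathlib

section
/- Let $M$ be a quasi-paving matroid on $[d]$ arising from a hypergraph $\mathcal{H} = \{H_1,\ldots,H_k\}$ (with any three members having empty intersection) and integer $n$, and let $Z \subseteq [d]$. Then the deletion $M \setminus Z$ is the quasi-paving matroid on $[d] \setminus Z$ arising from the hypergraph $\{H_1 \setminus Z, \ldots, H_k \setminus Z\}$ and the same integer $n$. -/
/-- Type-(1) circuits: `(n-1)`-subsets contained in the intersection of two distinct
members of the hypergraph `H`. -/
def IsType1 {α : Type*} [DecidableEq α] {k : ℕ} (H : Fin k → Finset α) (n : ℕ)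
    (C : Finset α) : Prop :=
  C.card = n - 1 ∧ ∃ i j : Fin k, i ≠ j ∧ C ⊆ H i ∩ H j

/-- Type-(2) circuits: `n`-subsets of some member of `H` containing no type-(1) set. -/
def IsType2 {α : Type*} [DecidableEq α] {k : ℕ} (H : Fin k → Finset α) (n : ℕ)
    (C : Finset α) : Prop :=
  C.card = n ∧ (∃ i : Fin k, C ⊆ H i) ∧ ∀ D ⊆ C, ¬ IsType1 H n D

/-- Type-(3) circuits: `(n+1)`-subsets containing no type-(1) or type-(2) set. -/
def IsType3 {α : Type*} [DecidableEq α] {k : ℕ} (H : Fin k → Finset α) (n : ℕ)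
    (C : Finset α) : Prop :=
  C.card = n + 1 ∧ (∀ D ⊆ C, ¬ IsType1 H n D) ∧ (∀ D ⊆ C, ¬ IsType2 H n D)

/-- The circuits of the quasi-paving matroid construction. -/
def QPCircuit {α : Type*} [DecidableEq α] {k : ℕ} (H : Fin k → Finset α) (n : ℕ)
    (C : Finset α) : Prop :=
  IsType1 H n C ∨ IsType2 H n C ∨ IsType3 H n C

/-- Any three distinct members of the hypergraph have empty intersection. -/
def TripleFree {α : Type*} [DecidableEq α] {k : ℕ} (H : Fin k → Finset α) : Prop :=
  ∀ i j m : Fin k, i ≠ j → i ≠ m → j ≠ m → H i ∩ H j ∩ H m = ∅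

/-- `X` has rank `r` in the matroid `M`: `r` is the size of a largest independent
subset of `X`. -/
def HasRank {α : Type*} (M : Matroid α) (X : Set α) (r : ℕ) : Prop :=
  (∃ I ⊆ X, M.Indep I ∧ I.ncard = r) ∧ ∀ I ⊆ X, M.Indep I → I.ncard ≤ r


lemma t1_eq {α : Type*} [DecidableEq α] {k : ℕ} (H : Fin k → Finset α) (n : ℕ)
    {Z C : Finset α} (hC : Disjoint C Z) :
    IsType1 (fun t => H t \ Z) n C ↔ IsType1 H n C := by
  unfold IsType1
  refine and_congr Iff.rfl ?_
  refine exists_congr fun i => exists_congr fun j => and_congr Iff.rfl ?_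
  simp only [Finset.subset_inter_iff, Finset.subset_sdiff, hC, and_true]

lemma t2_eq {α : Type*} [DecidableEq α] {k : ℕ} (H : Fin k → Finset α) (n : ℕ)
    {Z C : Finset α} (hC : Disjoint C Z) :
    IsType2 (fun t => H t \ Z) n C ↔ IsType2 H n C := by
  unfold IsType2
  refine and_congr Iff.rfl (and_congr ?_ ?_)
  · refine exists_congr fun i => ?_
    simp only [Finset.subset_sdiff, hC, and_true]
  · refine forall_congr' fun D => forall_congr' fun hD => not_congr ?_
    exact t1_eq H n (Finset.disjoint_of_subset_left hD hC)

lemma t3_eq {α : Type*} [DecidableEq α] {k : ℕ} (H : Fin k → Finset α) (n : ℕ)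
    {Z C : Finset α} (hC : Disjoint C Z) :
    IsType3 (fun t => H t \ Z) n C ↔ IsType3 H n C := by
  unfold IsType3
  refine and_congr Iff.rfl (and_congr ?_ ?_) <;>
    refine forall_congr' fun D => forall_congr' fun hD => not_congr ?_
  · exact t1_eq H n (Finset.disjoint_of_subset_left hD hC)
  · exact t2_eq H n (Finset.disjoint_of_subset_left hD hC)

lemma qp_eq {α : Type*} [DecidableEq α] {k : ℕ} (H : Fin k → Finset α) (n : ℕ)
    {Z C : Finset α} (hC : Disjoint C Z) :
    QPCircuit (fun t => H t \ Z) n C ↔ QPCircuit H n C :=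
  or_congr (t1_eq H n hC) (or_congr (t2_eq H n hC) (t3_eq H n hC))

/-- Let `M` be the quasi-paving matroid on `[d]` of the hypergraph `H`
(any three members intersecting trivially) and the positive integer `n ≤ d`, and let
`Z ⊆ [d]`.  Then the deletion `M \ Z` (the restriction of `M` to `[d] \ Z`) is the
quasi-paving matroid on `[d] \ Z` of the hypergraph `{H 1 \ Z, …, H k \ Z}` and the
same `n`: its independent sets are exactly the subsets of `[d] \ Z` containing no
circuit of that quasi-paving construction. -/
theorem statement4 {d k n : ℕ} (hn : 0 < n) (hnd : n ≤ d)
    (H : Fin k → Finset (Fin d)) (h3 : TripleFree H)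
    (M : Matroid (Fin d)) (hE : M.E = Set.univ)
    (hM : ∀ S : Set (Fin d), M.Indep S ↔
      ∀ C : Finset (Fin d), ↑C ⊆ S → ¬ QPCircuit H n C)
    (Z : Finset (Fin d)) :
    ∀ S : Set (Fin d), (M.restrict ((↑Z)ᶜ)).Indep S ↔
      (S ⊆ (↑Z)ᶜ ∧ ∀ C : Finset (Fin d), ↑C ⊆ S →
        ¬ QPCircuit (fun t => H t \ Z) n C) := by
  intro S
  rw [Matroid.restrict_indep_iff, hM, and_comm]
  refine and_congr_right fun hS => forall_congr' fun C => forall_congr' fun hCS => not_congr ?_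
  have hd : Disjoint C Z := by
    rw [Finset.disjoint_left]
    intro x hx hxZ
    exact hS (hCS hx) (Finset.mem_coe.mpr hxZ)
  exact (qp_eq H n hd).symm
end

section
/- Let $M$ be a tame paving matroid of rank $n$ on $[d]$ with set of dependent hyperplanes $\mathcal{L}$, let $\mathcal{Q} = \{Q_1,\ldots,Q_k\}$ be a partition of $\mathcal{L}$, and let $M(\mathcal{Q})$ be the quasi-paving matroid obtained from the hypergraph $\{H_1,\ldots,H_k\}$ with $H_i = \bigcup_{l \in Q_i} l$ and integer $n$. Then every dependent set of $M$ is a dependent set of $M(\mathcal{Q})$. -/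
/-- Circuits of a paving matroid with set of dependent hyperplanes `L`: `n`-subsets of
a member of `L`, and `(n+1)`-subsets containing no such `n`-subset. -/
def PavCircuit {α : Type*} [DecidableEq α] (L : Finset (Finset α)) (n : ℕ)
    (C : Finset α) : Prop :=
  (C.card = n ∧ ∃ l ∈ L, C ⊆ l) ∨
  (C.card = n + 1 ∧ ∀ D ⊆ C, ¬ (D.card = n ∧ ∃ l ∈ L, D ⊆ l))

/-- Let `M` be a tame paving matroid of rank `n` on `[d]` with set of
dependent hyperplanes `L`, let `Q 1, …, Q k` be a partition of `L`, and let `M(Q)` be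
the quasi-paving matroid of the hypergraph `H i = ⋃ {l | l ∈ Q i}` and integer `n`.
Then every dependent set of `M` (a set containing a circuit of `M`) is a dependent set
of `M(Q)`. -/
theorem statement5 (d n k : ℕ) (hd : n + 1 ≤ d) (hn : 0 < n)
    (L : Finset (Finset (Fin d)))
    (hL : ∀ l ∈ L, n ≤ l.card)
    (hpair : ∀ l₁ ∈ L, ∀ l₂ ∈ L, l₁ ≠ l₂ → (l₁ ∩ l₂).card ≤ n - 2)
    (htame : ∀ l₁ ∈ L, ∀ l₂ ∈ L, ∀ l₃ ∈ L,
      l₁ ≠ l₂ → l₁ ≠ l₃ → l₂ ≠ l₃ → l₁ ∩ l₂ ∩ l₃ = ∅)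
    (Q : Fin k → Finset (Finset (Fin d)))
    (hQne : ∀ i, (Q i).Nonempty)
    (hQdisj : ∀ i j, i ≠ j → Disjoint (Q i) (Q j))
    (hQunion : Finset.univ.biUnion Q = L) :
    ∀ S : Finset (Fin d), (∃ C ⊆ S, PavCircuit L n C) →
      ∃ C ⊆ S, QPCircuit (fun i => (Q i).biUnion (fun l => l)) n C := by
  intro S hS
  obtain ⟨C, hCS, hC⟩ := hS
  set H : Fin k → Finset (Fin d) := fun i => (Q i).biUnion (fun l => l) with hH
  by_cases h1 : ∃ D ⊆ C, IsType1 H n D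
  · obtain ⟨D, hDC, hD⟩ := h1
    exact ⟨D, hDC.trans hCS, Or.inl hD⟩
  push_neg at h1
  by_cases h2 : ∃ D ⊆ C, IsType2 H n D
  · obtain ⟨D, hDC, hD⟩ := h2
    exact ⟨D, hDC.trans hCS, Or.inr (Or.inl hD)⟩
  push_neg at h2
  rcases hC with ⟨hcard, l, hl, hCl⟩ | ⟨hcard, hno⟩
  · have hl' : ∃ i, l ∈ Q i := by
      rw [← hQunion] at hl
      obtain ⟨i, -, hi⟩ := Finset.mem_biUnion.mp hl
      exact ⟨i, hi⟩
    obtain ⟨i, hi⟩ := hl'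
    refine ⟨C, hCS, Or.inr (Or.inl ⟨hcard, ⟨i, ?_⟩, fun D hD => h1 D hD⟩)⟩
    exact hCl.trans (Finset.subset_biUnion_of_mem (fun l => l) hi)
  · exact ⟨C, hCS, Or.inr (Or.inr ⟨hcard, fun D hD => h1 D hD, fun D hD => h2 D hD⟩)⟩
end

section
/- Let $M'$ be a matroid on ground set $E'$ and $F$ a flat of $M'$. Define $M = M' +_F a$ on $E = E' \cup \{a\}$ (where $a \notin E'$) by declaring its bases to be $\mathcal{B}(M') \cup \{(\lambda \setminus \{b\}) \cup \{a\} : \lambda \in \mathcal{B}(M'),\ b \in \lambda \cap F\}$. Then this collection satisfies the basis exchange axiom, so $M$ is a matroid (the principal extension of $M'$ by $a$ into $F$), and $\mathrm{rank}(M) = \mathrm{rank}(M')$. -/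
/-- The bases of the principal extension `M' +_F a` of `M'` by `a` into the flat `F`:
the bases of `M'`, together with the sets `(λ \ {b}) ∪ {a}` for `λ` a base of `M'` and
`b ∈ λ ∩ F`. -/
def PrincipalExtBase {α : Type*} (M' : Matroid α) (F : Set α) (a : α)
    (B : Set α) : Prop :=
  M'.IsBase B ∨ ∃ B₀ b, M'.IsBase B₀ ∧ b ∈ B₀ ∩ F ∧ B = insert a (B₀ \ {b})

/-!
A set lies in a member of the collection iff removing `a` leaves an `M'`-independent set which,
when `a` was present, does not span `F`. Exchange is verified case by case through exchanges
between the underlying bases of `M'`. For maximality inside `X`, a basis `J` of `X \ {a}` is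
enlarged by `a` when `X \ {a}` does not span `F`; otherwise, if `a` has to be kept, an element
`f ∈ F` outside the span of the current set is adjoined before choosing the basis and is then
traded for `a`. Trading an element of a base of `M'` for `a` preserves cardinality.
-/

open Set Matroid

section PrincipalExtension

variable {α : Type*} {M' : Matroid α} {F : Set α} {a : α}

lemma principalExtBase_inter_ground (M' : Matroid α) (F : Set α) (a : α) :
    PrincipalExtBase M' (F ∩ M'.E) a = PrincipalExtBase M' F a := by
  ext B
  refine or_congr_right ⟨?_, ?_⟩ <;> rintro ⟨β, b, hβ, ⟨hbβ, hbF⟩, rfl⟩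
  · exact ⟨β, b, hβ, ⟨hbβ, hbF.1⟩, rfl⟩
  · exact ⟨β, b, hβ, ⟨hbβ, hbF, hβ.subset_ground hbβ⟩, rfl⟩

lemma PrincipalExtBase.subset_insert_ground {B : Set α} (hB : PrincipalExtBase M' F a B) :
    B ⊆ insert a M'.E := by
  rcases hB with hB | ⟨β, b, hβ, -, rfl⟩
  · exact hB.subset_ground.trans (subset_insert _ _)
  · exact insert_subset_insert (sdiff_subset.trans hβ.subset_ground)

lemma PrincipalExtBase.encard_eq (ha : a ∉ M'.E) {B β : Set α}
    (hB : PrincipalExtBase M' F a B) (hβ : M'.IsBase β) : B.encard = β.encard := by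
  rcases hB with hB | ⟨β₀, b, hβ₀, ⟨hbβ₀, -⟩, rfl⟩
  · exact hB.encard_eq_encard_of_isBase hβ
  · have haβ₀ : a ∉ β₀ \ {b} := fun h => ha (hβ₀.subset_ground h.1)
    rw [encard_insert_of_notMem haβ₀, encard_sdiff_singleton_add_one hbβ₀,
      hβ₀.encard_eq_encard_of_isBase hβ]

lemma Matroid.IsBase.principalExtBase_insert_sdiff (hF : F ⊆ M'.E) {β : Set α} {x f : α}
    (hβ : M'.IsBase β) (hx : x ∈ β) (hfF : f ∈ F) (hf : f ∉ M'.closure (β \ {x})) :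
    PrincipalExtBase M' F a (insert a (β \ {x})) := by
  have hfβ : f ∉ β \ {x} := fun h =>
    hf (M'.mem_closure_of_mem h (sdiff_subset.trans hβ.subset_ground))
  refine Or.inr ⟨insert f (β \ {x}), f, hβ.exchange_base_of_notMem_closure hx hf (hF hfF),
    ⟨mem_insert _ _, hfF⟩, ?_⟩
  rw [insert_sdiff_self_of_notMem hfβ]

lemma Matroid.IsBase.principalExtBase_exchange (ha : a ∉ M'.E) {β : Set α} {b x y : α}
    (hβ : M'.IsBase β) (hb : b ∈ β ∩ F) (hx : x ∈ β) (hxb : x ≠ b) (hyβ : y ∉ β)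
    (hy : M'.IsBase (insert y (β \ {x}))) :
    PrincipalExtBase M' F a (insert y (insert a (β \ {b}) \ {x})) := by
  have hxa : x ≠ a := fun h => ha (h ▸ hβ.subset_ground hx)
  have hyb : y ≠ b := fun h => hyβ (h ▸ hb.1)
  refine Or.inr ⟨insert y (β \ {x}), b, hy, ⟨mem_insert_of_mem _ ⟨hb.1, hxb.symm⟩, hb.2⟩, ?_⟩
  grind

lemma Matroid.IsBase.exists_principalExtExchange_of_mem (ha : a ∉ M'.E) {β β₂ : Set α} {b c : α}
    (hβ : M'.IsBase β) (hβ₂ : M'.IsBase β₂) (hb : b ∈ β) (hc : c ∈ β ∩ F) (hbc : b ≠ c) :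
    ∃ y ∈ β₂ \ (β \ {b}), y ≠ c ∧
      PrincipalExtBase M' F a (insert y (insert a (β \ {c}) \ {b})) := by
  by_cases hbβ₂ : b ∈ β₂
  · have hba : b ≠ a := fun h => ha (h ▸ hβ.subset_ground hb)
    refine ⟨b, ⟨hbβ₂, fun h => h.2 rfl⟩, hbc, ?_⟩
    rw [show insert b (insert a (β \ {c}) \ {b}) = insert a (β \ {c}) by grind]
    exact Or.inr ⟨β, c, hβ, hc, rfl⟩
  · obtain ⟨z, ⟨hzβ₂, hzβ⟩, hz⟩ := hβ.exchange hβ₂ ⟨hb, hbβ₂⟩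
    exact ⟨z, ⟨hzβ₂, fun h => hzβ h.1⟩, fun h => hzβ (h ▸ hc.1),
      hβ.principalExtBase_exchange ha hc hb hbc hzβ hz⟩

lemma Matroid.IsBase.exists_principalExtExchange_isBase_insert (ha : a ∉ M'.E)
    (hF : F ⊆ M'.E) {β₁ β₂ : Set α} {b₂ x : α} (hβ₁ : M'.IsBase β₁) (hβ₂ : M'.IsBase β₂)
    (hb₂ : b₂ ∈ F) (hx : x ∈ β₁ \ insert a (β₂ \ {b₂})) :
    ∃ y ∈ insert a (β₂ \ {b₂}) \ β₁, PrincipalExtBase M' F a (insert y (β₁ \ {x})) := by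
  by_cases hFx : F ⊆ M'.closure (β₁ \ {x})
  · have hxF : x ∉ F := fun h => hβ₁.indep.notMem_closure_sdiff_of_mem hx.1 (hFx h)
    have hxβ₂ : x ∉ β₂ := fun h => hx.2 (mem_insert_of_mem _ ⟨h, fun h' => hxF (h' ▸ hb₂)⟩)
    obtain ⟨y, ⟨hyβ₂, hyβ₁⟩, hy⟩ := hβ₁.exchange hβ₂ ⟨hx.1, hxβ₂⟩
    have hycl : y ∉ M'.closure (β₁ \ {x}) :=
      (((hβ₁.indep.subset sdiff_subset).insert_indep_iff_of_notMem fun h => hyβ₁ h.1).1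
        hy.indep).2
    exact ⟨y, ⟨mem_insert_of_mem _ ⟨hyβ₂, fun h => hycl (h ▸ hFx hb₂)⟩, hyβ₁⟩, Or.inl hy⟩
  · obtain ⟨f, hfF, hf⟩ := not_subset.1 hFx
    exact ⟨a, ⟨mem_insert _ _, fun h => ha (hβ₁.subset_ground h)⟩,
      hβ₁.principalExtBase_insert_sdiff hF hx.1 hfF hf⟩

lemma Matroid.IsBase.exists_principalExtExchange_insert_isBase (ha : a ∉ M'.E)
    {β₁ β₂ : Set α} {b₁ x : α} (hβ₁ : M'.IsBase β₁) (hb₁ : b₁ ∈ β₁ ∩ F) (hβ₂ : M'.IsBase β₂)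
    (hx : x ∈ insert a (β₁ \ {b₁}) \ β₂) :
    ∃ y ∈ β₂ \ insert a (β₁ \ {b₁}),
      PrincipalExtBase M' F a (insert y (insert a (β₁ \ {b₁}) \ {x})) := by
  have hya : ∀ {y}, y ∈ β₂ → y ≠ a := fun hy h => ha (h ▸ hβ₂.subset_ground hy)
  obtain ⟨rfl | ⟨hxβ₁, hxb₁⟩, hxβ₂⟩ := hx
  · have hβ₂cl : ¬ β₂ ⊆ M'.closure (β₁ \ {b₁}) := fun h =>
      hβ₁.indep.notMem_closure_sdiff_of_mem hb₁.1 <|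
        (hβ₂.closure_eq ▸ M'.closure_subset_closure_of_subset_closure h) (hβ₁.subset_ground hb₁.1)
    obtain ⟨y, hyβ₂, hy⟩ := not_subset.1 hβ₂cl
    refine ⟨y, ⟨hyβ₂, ?_⟩, Or.inl ?_⟩
    · rintro (h | h)
      · exact hya hyβ₂ h
      · exact hy (M'.mem_closure_of_mem h (sdiff_subset.trans hβ₁.subset_ground))
    · rw [insert_sdiff_self_of_notMem fun h => ha (hβ₁.subset_ground h.1)]
      exact hβ₁.exchange_base_of_notMem_closure hb₁.1 hy (hβ₂.subset_ground hyβ₂)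
  · obtain ⟨y, ⟨hyβ₂, hyβ₁⟩, hy⟩ := hβ₁.exchange hβ₂ ⟨hxβ₁, hxβ₂⟩
    refine ⟨y, ⟨hyβ₂, ?_⟩, hβ₁.principalExtBase_exchange ha hb₁ hxβ₁ hxb₁ hyβ₁ hy⟩
    rintro (h | h)
    · exact hya hyβ₂ h
    · exact hyβ₁ h.1

lemma Matroid.IsBase.exists_principalExtExchange_insert_insert (ha : a ∉ M'.E)
    {β₁ β₂ : Set α} {b₁ b₂ x : α} (hβ₁ : M'.IsBase β₁) (hb₁ : b₁ ∈ β₁ ∩ F)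
    (hβ₂ : M'.IsBase β₂) (hb₂ : b₂ ∈ F) (hx : x ∈ insert a (β₁ \ {b₁}) \ insert a (β₂ \ {b₂})) :
    ∃ y ∈ insert a (β₂ \ {b₂}) \ insert a (β₁ \ {b₁}),
      PrincipalExtBase M' F a (insert y (insert a (β₁ \ {b₁}) \ {x})) := by
  have hxa : x ≠ a := fun h => hx.2 (h ▸ mem_insert _ _)
  obtain ⟨hxβ₁, hxb₁⟩ := hx.1.resolve_left hxa
  have hb₁a : b₁ ≠ a := fun h => ha (h ▸ hβ₁.subset_ground hb₁.1)
  have hya : ∀ {y}, y ∈ β₂ → y ≠ a := fun hy h => ha (h ▸ hβ₂.subset_ground hy)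
  by_cases hxβ₂ : x ∈ β₂
  · obtain rfl : x = b₂ := by_contra fun h => hx.2 (mem_insert_of_mem _ ⟨hxβ₂, h⟩)
    obtain ⟨y, ⟨hyβ₂, hyβ₁⟩, hyx, hy⟩ :=
      hβ₁.exists_principalExtExchange_of_mem ha hβ₂ hb₁.1 ⟨hxβ₁, hb₂⟩ (Ne.symm hxb₁)
    refine ⟨y, ⟨mem_insert_of_mem _ ⟨hyβ₂, hyx⟩, ?_⟩, ?_⟩
    · grind
    · convert hy using 1; grind
  obtain ⟨y, ⟨hyβ₂, hyβ₁⟩, hy⟩ := hβ₁.exchange hβ₂ ⟨hxβ₁, hxβ₂⟩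
  by_cases hyb₂ : y = b₂
  · subst hyb₂
    obtain ⟨z, ⟨hzβ₂, hzβ⟩, hzy, hz⟩ := hy.exists_principalExtExchange_of_mem ha hβ₂
      (mem_insert_of_mem _ ⟨hb₁.1, Ne.symm hxb₁⟩) ⟨mem_insert _ _, hb₂⟩
      (fun h => hyβ₁ (h ▸ hb₁.1))
    refine ⟨z, ⟨mem_insert_of_mem _ ⟨hzβ₂, hzy⟩, ?_⟩, ?_⟩
    · grind
    · convert hz using 1; grind
  · refine ⟨y, ⟨mem_insert_of_mem _ ⟨hyβ₂, hyb₂⟩, ?_⟩,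
      hβ₁.principalExtBase_exchange ha hb₁ hxβ₁ hxb₁ hyβ₁ hy⟩
    rintro (h | h)
    · exact hya hyβ₂ h
    · exact hyβ₁ h.1

lemma principalExtBase_exchangeProperty (ha : a ∉ M'.E) (hF : F ⊆ M'.E) :
    ExchangeProperty (PrincipalExtBase M' F a) := by
  rintro B₁ B₂ (hβ₁ | ⟨β₁, b₁, hβ₁, hb₁, rfl⟩) (hβ₂ | ⟨β₂, b₂, hβ₂, hb₂, rfl⟩) x hx
  · obtain ⟨y, hy, hB⟩ := hβ₁.exchange hβ₂ hx
    exact ⟨y, hy, Or.inl hB⟩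
  · exact hβ₁.exists_principalExtExchange_isBase_insert ha hF hβ₂ hb₂.2 hx
  · exact hβ₁.exists_principalExtExchange_insert_isBase ha hb₁ hβ₂ hx
  · exact hβ₁.exists_principalExtExchange_insert_insert ha hb₁ hβ₂ hb₂.2 hx

def PrincipalExtIndep (M' : Matroid α) (F : Set α) (a : α) (I : Set α) : Prop :=
  M'.Indep (I \ {a}) ∧ (a ∈ I → ¬ F ⊆ M'.closure (I \ {a}))

lemma exists_principalExtBase_superset_iff (ha : a ∉ M'.E) (hF : F ⊆ M'.E) {I : Set α} :
    (∃ B, PrincipalExtBase M' F a B ∧ I ⊆ B) ↔ PrincipalExtIndep M' F a I := by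
  constructor
  · rintro ⟨B, hβ | ⟨β, b, hβ, ⟨hbβ, hbF⟩, rfl⟩, hIB⟩
    · exact ⟨hβ.indep.subset (sdiff_subset.trans hIB), fun h _ => ha (hβ.subset_ground (hIB h))⟩
    · have hIβ : I \ {a} ⊆ β \ {b} := sdiff_singleton_subset_iff.2 hIB
      exact ⟨hβ.indep.subset (hIβ.trans sdiff_subset), fun _ hFI =>
        hβ.indep.notMem_closure_sdiff_of_mem hbβ (M'.closure_subset_closure hIβ (hFI hbF))⟩
  · rintro ⟨hI, hIa⟩
    by_cases haI : a ∈ I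
    · obtain ⟨f, hfF, hf⟩ := not_subset.1 (hIa haI)
      have hfI : f ∉ I \ {a} := fun h => hf (M'.mem_closure_of_mem h hI.subset_ground)
      obtain ⟨β, hβ, hfIβ⟩ :=
        (hI.insert_indep_iff.2 (Or.inl ⟨hF hfF, hf⟩)).exists_isBase_superset
      refine ⟨insert a (β \ {f}), Or.inr ⟨β, f, hβ, ⟨hfIβ (mem_insert _ _), hfF⟩, rfl⟩, ?_⟩
      exact sdiff_singleton_subset_iff.1 <|
        subset_sdiff_singleton ((subset_insert _ _).trans hfIβ) hfI
    · rw [sdiff_singleton_eq_self haI] at hI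
      obtain ⟨β, hβ, hIβ⟩ := hI.exists_isBase_superset
      exact ⟨β, Or.inl hβ, hIβ⟩

lemma maximal_principalExtIndep_insert {X J : Set α} (hJ : M'.IsBasis' J (X \ {a}))
    (haX : a ∈ X) (hFX : ¬ F ⊆ M'.closure (X \ {a})) :
    Maximal (fun K => PrincipalExtIndep M' F a K ∧ K ⊆ X) (insert a J) := by
  have haJ : a ∉ J := fun h => (hJ.subset h).2 rfl
  refine ⟨⟨?_, insert_subset haX (hJ.subset.trans sdiff_subset)⟩, fun K ⟨hK, hKX⟩ hJK => ?_⟩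
  · rw [PrincipalExtIndep, insert_sdiff_self_of_notMem haJ, hJ.closure_eq_closure]
    exact ⟨hJ.indep, fun _ => hFX⟩
  · exact sdiff_singleton_subset_iff.1 <| hJ.2 ⟨hK.1, sdiff_subset_sdiff_left hKX⟩
      (subset_sdiff_singleton ((subset_insert _ _).trans hJK) haJ)

lemma maximal_principalExtIndep_of_isBasis' {X J : Set α} (hJ : M'.IsBasis' J (X \ {a}))
    (hFX : a ∈ X → F ⊆ M'.closure (X \ {a})) :
    Maximal (fun K => PrincipalExtIndep M' F a K ∧ K ⊆ X) J := by
  have haJ : a ∉ J := fun h => (hJ.subset h).2 rfl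
  refine ⟨⟨⟨(sdiff_singleton_eq_self haJ).symm ▸ hJ.indep, fun h => absurd h haJ⟩,
    hJ.subset.trans sdiff_subset⟩, fun K ⟨hK, hKX⟩ hJK => ?_⟩
  have hJK' : J ⊆ K \ {a} := subset_sdiff_singleton hJK haJ
  have haK : a ∉ K := fun h => hK.2 h <| (hFX (hKX h)).trans <|
    hJ.closure_eq_closure ▸ M'.closure_subset_closure hJK'
  rw [← sdiff_singleton_eq_self haK]
  exact hJ.2 ⟨hK.1, sdiff_subset_sdiff_left hKX⟩ hJK'

/-- `f` stands in for `a`: a larger independent set would have to span `f`, hence `X \ {a}`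
and `F`. -/
lemma maximal_principalExtIndep_insert_sdiff (ha : a ∉ M'.E) (hF : F ⊆ M'.E) {X J : Set α}
    {f : α} (hJ : M'.IsBasis' J (insert f (X \ {a}))) (hfJ : f ∈ J) (hfF : f ∈ F)
    (haX : a ∈ X) (hFX : F ⊆ M'.closure (X \ {a})) :
    Maximal (fun K => PrincipalExtIndep M' F a K ∧ K ⊆ X) (insert a (J \ {f})) := by
  have haJ : a ∉ J \ {f} := fun h => ha (hJ.indep.subset_ground h.1)
  have hfJf : f ∉ M'.closure (J \ {f}) := hJ.indep.notMem_closure_sdiff_of_mem hfJ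
  have hJX : J \ {f} ⊆ X \ {a} := sdiff_singleton_subset_iff.2 hJ.subset
  refine ⟨⟨?_, insert_subset haX (hJX.trans sdiff_subset)⟩, fun K ⟨hK, hKX⟩ hJK => ?_⟩
  · rw [PrincipalExtIndep, insert_sdiff_self_of_notMem haJ]
    exact ⟨hJ.indep.subset sdiff_subset, fun _ h => hfJf (h hfF)⟩
  have hJK' : J \ {f} ⊆ K \ {a} := subset_sdiff_singleton ((subset_insert _ _).trans hJK) haJ
  have hJf : insert f (J \ {f}) = J := by rw [insert_sdiff_singleton, insert_eq_of_mem hfJ]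
  have hfK : f ∉ M'.closure (K \ {a}) := by
    intro hfK
    have hJcl : J ⊆ M'.closure (K \ {a}) :=
      hJf ▸ insert_subset hfK (hJK'.trans (M'.subset_closure _ hK.1.subset_ground))
    refine hK.2 (hJK (mem_insert _ _)) (calc
      F ⊆ M'.closure (X \ {a}) := hFX
      _ ⊆ M'.closure (insert f (X \ {a})) := M'.closure_subset_closure (subset_insert _ _)
      _ = M'.closure J := hJ.closure_eq_closure.symm
      _ ⊆ M'.closure (K \ {a}) := M'.closure_subset_closure_of_subset_closure hJcl)
  have hfKa : f ∉ K \ {a} := fun h => hfK (M'.mem_closure_of_mem h hK.1.subset_ground)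
  have hKJ : insert f (K \ {a}) ⊆ J :=
    hJ.2 ⟨hK.1.insert_indep_iff.2 (Or.inl ⟨hF hfF, hfK⟩),
      insert_subset_insert (sdiff_subset_sdiff_left hKX)⟩ (hJf ▸ insert_subset_insert hJK')
  exact sdiff_singleton_subset_iff.1 <|
    subset_sdiff_singleton ((subset_insert _ _).trans hKJ) hfKa

lemma principalExtIndep_existsMaximalSubsetProperty (ha : a ∉ M'.E) (hF : F ⊆ M'.E)
    (X : Set α) : ExistsMaximalSubsetProperty (PrincipalExtIndep M' F a) X := by
  intro I hI hIX
  obtain ⟨J, hJ, hIJ⟩ := hI.1.subset_isBasis'_of_subset (sdiff_subset_sdiff_left hIX)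
  by_cases hFX : a ∈ X ∧ ¬ F ⊆ M'.closure (X \ {a})
  · exact ⟨insert a J, sdiff_singleton_subset_iff.1 hIJ,
      maximal_principalExtIndep_insert hJ hFX.1 hFX.2⟩
  rw [not_and_not_right] at hFX
  by_cases haI : a ∈ I
  · obtain ⟨f, hfF, hf⟩ := not_subset.1 (hI.2 haI)
    have hfI : f ∉ I \ {a} := fun h => hf (M'.mem_closure_of_mem h hI.1.subset_ground)
    have hfIind : M'.Indep (insert f (I \ {a})) := hI.1.insert_indep_iff.2 (Or.inl ⟨hF hfF, hf⟩)
    obtain ⟨J₁, hJ₁, hIJ₁⟩ :=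
      hfIind.subset_isBasis'_of_subset (insert_subset_insert (sdiff_subset_sdiff_left hIX))
    refine ⟨insert a (J₁ \ {f}), ?_, maximal_principalExtIndep_insert_sdiff ha hF hJ₁
      (hIJ₁ (mem_insert _ _)) hfF (hIX haI) (hFX (hIX haI))⟩
    exact sdiff_singleton_subset_iff.1 <|
      subset_sdiff_singleton ((subset_insert _ _).trans hIJ₁) hfI
  · exact ⟨J, by rwa [sdiff_singleton_eq_self haI] at hIJ,
      maximal_principalExtIndep_of_isBasis' hJ hFX⟩

/-- The principal extension `M' +_F a`. -/
def Matroid.principalExt (M' : Matroid α) (F : Set α) (a : α) (ha : a ∉ M'.E)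
    (hF : F ⊆ M'.E) : Matroid α :=
  Matroid.ofBase (insert a M'.E) (PrincipalExtBase M' F a)
    (M'.exists_isBase.imp fun _ => Or.inl) (principalExtBase_exchangeProperty ha hF)
    (fun X _ => (funext fun _ => propext (exists_principalExtBase_superset_iff ha hF)) ▸
      principalExtIndep_existsMaximalSubsetProperty ha hF X)
    (fun _ => PrincipalExtBase.subset_insert_ground)

end PrincipalExtension

theorem statement14_general {α : Type*} (M' : Matroid α) (a : α) (ha : a ∉ M'.E)
    (F : Set α) :
    (∀ B₁ B₂ : Set α, PrincipalExtBase M' F a B₁ → PrincipalExtBase M' F a B₂ →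
      ∀ x ∈ B₁ \ B₂, ∃ y ∈ B₂ \ B₁,
        PrincipalExtBase M' F a (insert y (B₁ \ {x}))) ∧
    (∃ M : Matroid α, M.E = insert a M'.E ∧
      (∀ B : Set α, M.IsBase B ↔ PrincipalExtBase M' F a B) ∧
      (∀ B B' : Set α, M.IsBase B → M'.IsBase B' → B.ncard = B'.ncard)) := by
  rw [← principalExtBase_inter_ground]
  refine ⟨principalExtBase_exchangeProperty ha inter_subset_right,
    M'.principalExt _ a ha inter_subset_right, rfl, fun _ => Iff.rfl, fun B B' hB hB' => ?_⟩
  rw [ncard_def, ncard_def, PrincipalExtBase.encard_eq ha hB hB']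

/-- Let `M'` be a matroid on `E'`, `F` a flat of `M'`, and
`a ∉ E'`.  Then the collection `PrincipalExtBase M' F a` satisfies the basis exchange
axiom; consequently it is the set of bases of a matroid `M = M' +_F a` on
`E' ∪ {a}` (the principal extension), and `rank M = rank M'` (every base of `M` has
the same cardinality as every base of `M'`). -/
theorem statement14 {α : Type*} (M' : Matroid α) (a : α) (ha : a ∉ M'.E)
    (F : Set α) (hF : M'.IsFlat F) :
    (∀ B₁ B₂ : Set α, PrincipalExtBase M' F a B₁ → PrincipalExtBase M' F a B₂ →
      ∀ x ∈ B₁ \ B₂, ∃ y ∈ B₂ \ B₁,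
        PrincipalExtBase M' F a (insert y (B₁ \ {x}))) ∧
    (∃ M : Matroid α, M.E = insert a M'.E ∧
      (∀ B : Set α, M.IsBase B ↔ PrincipalExtBase M' F a B) ∧
      (∀ B B' : Set α, M.IsBase B → M'.IsBase B' → B.ncard = B'.ncard)) :=
  statement14_general M' a ha F
end

section
/- Every $n$-quasi-paving matroid of rank $n$ on a finite ground set can be obtained from a tame paving matroid of rank $n$ by a finite sequence of principal extensions along flats of rank $n-2$. -/
/-- One step: `M₂` is a principal extension of `M₁` by a new element along a flat of
rank `n - 2`. -/
def PrincipalExtStep {α : Type*} (n : ℕ) (M₁ M₂ : Matroid α) : Prop :=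
  ∃ (a : α) (F : Set α), a ∉ M₁.E ∧ M₁.IsFlat F ∧ HasRank M₁ F (n - 2) ∧
    M₂.E = insert a M₁.E ∧ ∀ B : Set α, M₂.IsBase B ↔ PrincipalExtBase M₁ F a B

open Set

namespace Matroid

variable {α : Type*} {M : Matroid α} {x y : α} {F I X B : Set α}

lemma hasRank_of_isBasis (hIX : M.IsBasis I X) (hI : I.Finite) : HasRank M X I.ncard := by
  refine ⟨⟨I, hIX.subset, hIX.indep, rfl⟩, fun J hJX hJ => ?_⟩
  obtain ⟨J', hJ', hJJ'⟩ := hJ.subset_isBasis_of_subset hJX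
  have hcard : J'.encard = I.encard := hJ'.encard_eq_encard hIX
  have hJ'fin : J'.Finite := finite_of_encard_eq_coe (hcard.trans hI.cast_ncard_eq.symm)
  calc J.ncard ≤ J'.ncard := ncard_le_ncard hJJ' hJ'fin
    _ = I.ncard := by rw [ncard_def, hcard, ← ncard_def]

lemma Indep.mem_closure_of_not_indep_insert (hI : M.Indep I) (hy : y ∈ M.E)
    (h : ¬ M.Indep (insert y I)) : y ∈ M.closure I :=
  by_contra fun hcl => h ((hI.notMem_closure_iff hy).1 hcl).1

lemma isBase_delete_iff_of_mem_closure (hF : F ⊆ M.E \ {x}) (hxF : x ∈ M.closure F) :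
    (M ＼ {x}).IsBase B ↔ M.IsBase B ∧ x ∉ B := by
  have hspan : M.Spanning (M.E \ {x}) := by
    rw [spanning_iff_closure_eq]
    refine (M.closure_subset_ground _).antisymm fun y hy => ?_
    obtain rfl | hyx := eq_or_ne y x
    · exact M.closure_subset_closure hF hxF
    · exact M.subset_closure _ sdiff_subset ⟨hy, hyx⟩
  rw [delete_eq_restrict, hspan.isBase_restrict_iff]
  exact ⟨fun h => ⟨h.1, fun hx => (h.2 hx).2 rfl⟩,
    fun h => ⟨h.1, subset_sdiff_singleton h.1.subset_ground h.2⟩⟩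

theorem isBase_iff_principalExtBase_delete (hF : F ⊆ M.E \ {x}) (hxF : x ∈ M.closure F)
    (hfree : ∀ I, M.Indep I → x ∉ I → x ∈ M.closure I → F ⊆ M.closure I)
    (B : Set α) :
    M.IsBase B ↔ PrincipalExtBase (M ＼ {x}) F x B := by
  have hbase := fun B => isBase_delete_iff_of_mem_closure (B := B) hF hxF
  constructor
  · intro hB
    by_cases hxB : x ∈ B
    swap
    · exact .inl ((hbase B).2 ⟨hB, hxB⟩)
    have hI : M.Indep (B \ {x}) := hB.indep.subset sdiff_subset
    have hxI : x ∉ M.closure (B \ {x}) := hB.indep.notMem_closure_sdiff_of_mem hxB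
    obtain ⟨b, hbF, hbI⟩ : ∃ b ∈ F, b ∉ M.closure (B \ {x}) := by
      by_contra! h
      exact hxI (M.closure_subset_closure_of_subset_closure h hxF)
    have hbx : b ≠ x := (hF hbF).2
    have hbB : b ∉ B := fun h => hbI (M.subset_closure _ hI.subset_ground ⟨h, hbx⟩)
    have hB₀ : M.IsBase (insert b (B \ {x})) := hB.exchange_isBase_of_indep hbB
      ((hI.insert_indep_iff_of_notMem fun h => hbB h.1).2 ⟨(hF hbF).1, hbI⟩)
    refine .inr ⟨_, b, (hbase _).2 ⟨hB₀, ?_⟩, ⟨mem_insert _ _, hbF⟩, ?_⟩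
    · rintro (h | h)
      exacts [hbx h.symm, h.2 rfl]
    · rw [insert_sdiff_self_of_notMem fun h => hbB h.1, insert_sdiff_singleton,
        insert_eq_of_mem hxB]
  · rintro (hB | ⟨B₀, b, hB₀, ⟨hbB₀, hbF⟩, rfl⟩)
    · exact ((hbase B).1 hB).1
    obtain ⟨hB₀, hxB₀⟩ := (hbase B₀).1 hB₀
    have hI : M.Indep (B₀ \ {b}) := hB₀.indep.subset sdiff_subset
    have hxI : x ∉ B₀ \ {b} := fun h => hxB₀ h.1
    refine hB₀.exchange_isBase_of_indep hxB₀ ((hI.insert_indep_iff_of_notMem hxI).2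
      ⟨M.closure_subset_ground F hxF, fun hx => ?_⟩)
    exact hB₀.indep.notMem_closure_sdiff_of_mem hbB₀ (hfree _ hI hxI hx hbF)

theorem principalExtStep_delete {n : ℕ} {A : Set α} (hA : M.Indep A) (hAfin : A.Finite)
    (hAn : A.ncard = n - 2) (hxA : x ∉ A) (hxcl : x ∈ M.closure A)
    (hfree : ∀ I, M.Indep I → x ∉ I → x ∈ M.closure I → A ⊆ M.closure I) :
    PrincipalExtStep n (M ＼ {x}) M := by
  have hA' : (M ＼ {x}).Indep A := deleteElem_indep_iff.2 ⟨hA, hxA⟩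
  have hAF : A ⊆ (M ＼ {x}).closure A := (M ＼ {x}).subset_closure A hA'.subset_ground
  have hFA : (M ＼ {x}).closure A ⊆ M.closure A := by
    rw [delete_closure_eq]
    exact sdiff_subset.trans (M.closure_subset_closure sdiff_subset)
  refine ⟨x, (M ＼ {x}).closure A, fun h => h.2 rfl, isFlat_closure _, ?_, ?_,
    isBase_iff_principalExtBase_delete (closure_subset_ground _ _)
      (M.closure_subset_closure hAF hxcl) fun I hI hxI hx =>
        hFA.trans (M.closure_subset_closure_of_subset_closure (hfree I hI hxI hx))⟩
  · rw [← hAn]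
    exact hasRank_of_isBasis hA'.isBasis_self.isBasis_closure_right hAfin
  · rw [delete_ground, insert_sdiff_singleton, insert_eq_of_mem (M.closure_subset_ground _ hxcl)]

end Matroid

section Hypergraph

variable {α : Type*} [DecidableEq α] {k n : ℕ} {H : Fin k → Finset α} {C : Finset α}
  {i j a b : Fin k} {x y : α}

namespace TripleFree

lemma eq_or_eq (hTF : TripleFree H) (hij : i ≠ j) (hy : y ∈ H i ∩ H j) (hya : y ∈ H a) :
    a = i ∨ a = j := by
  by_contra! h
  have : y ∈ H a ∩ H i ∩ H j := by simp_all [Finset.mem_inter]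
  simp [hTF a i j h.1 h.2 hij] at this

lemma inter_eq (hTF : TripleFree H) (hij : i ≠ j) (hab : a ≠ b) (hy : y ∈ H i ∩ H j)
    (hy' : y ∈ H a ∩ H b) : H a ∩ H b = H i ∩ H j := by
  rw [Finset.mem_inter] at hy'
  rcases hTF.eq_or_eq hij hy hy'.1 with rfl | rfl <;>
    rcases hTF.eq_or_eq hij hy hy'.2 with rfl | rfl
  all_goals first | exact absurd rfl hab | rfl | exact Finset.inter_comm _ _

lemma erase (hTF : TripleFree H) (x : α) : TripleFree fun m => (H m).erase x :=
  fun i j m hij him hjm => Finset.subset_empty.1 <| hTF i j m hij him hjm ▸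
    Finset.inter_subset_inter (Finset.inter_subset_inter (Finset.erase_subset _ _)
      (Finset.erase_subset _ _)) (Finset.erase_subset _ _)

/-- A type-(1) set through `y` lies in `H i ∩ H j`, so trading `y` back for `x` would give a
type-(1) set inside `C`. -/
lemma isType2_insert_erase (hTF : TripleFree H) (hij : i ≠ j) (hx : x ∈ H i ∩ H j)
    (hy : y ∈ H i ∩ H j) (hyC : y ∉ C) (hC : IsType2 H n C) (hxC : x ∈ C) :
    IsType2 H n (insert y (C.erase x)) := by
  obtain ⟨hcard, ⟨a, hCa⟩, hno⟩ := hC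
  have hya : y ∈ H a := by
    rcases hTF.eq_or_eq hij hx (hCa hxC) with rfl | rfl
    exacts [(Finset.mem_inter.1 hy).1, (Finset.mem_inter.1 hy).2]
  have hyCx : y ∉ C.erase x := fun h => hyC (Finset.mem_of_mem_erase h)
  refine ⟨?_, ⟨a, Finset.insert_subset hya ((Finset.erase_subset _ _).trans hCa)⟩, ?_⟩
  · have := Finset.card_pos.2 ⟨x, hxC⟩
    rw [Finset.card_insert_of_notMem hyCx, Finset.card_erase_of_mem hxC]
    omega
  rintro D hD ⟨hDcard, e, f, hef, hDef⟩
  by_cases hyD : y ∈ D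
  · have hxD : x ∉ D := fun h => by
      rcases Finset.mem_insert.1 (hD h) with rfl | h
      exacts [hyC hxC, (Finset.mem_erase.1 h).1 rfl]
    have hDP : D ⊆ H i ∩ H j := hTF.inter_eq hij hef hy (hDef hyD) ▸ hDef
    refine hno (insert x (D.erase y))
      (Finset.insert_subset hxC ((Finset.subset_insert_iff.1 hD).trans (Finset.erase_subset _ _)))
      ⟨?_, i, j, hij, Finset.insert_subset hx ((Finset.erase_subset _ _).trans hDP)⟩
    rw [Finset.card_insert_of_notMem fun h => hxD (Finset.mem_of_mem_erase h),
      Finset.card_erase_of_mem hyD]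
    have := Finset.card_pos.2 ⟨y, hyD⟩
    omega
  · exact hno D (((Finset.subset_insert_iff_of_notMem hyD).1 hD).trans (Finset.erase_subset _ _))
      ⟨hDcard, e, f, hef, hDef⟩

end TripleFree

lemma Finset.erase_inter_erase (s t : Finset α) (x : α) :
    s.erase x ∩ t.erase x = (s ∩ t).erase x := by
  ext; simp only [Finset.mem_inter, Finset.mem_erase]; tauto

lemma isType1_erase_iff (hxC : x ∉ C) :
    IsType1 (fun m => (H m).erase x) n C ↔ IsType1 H n C := by
  simp only [IsType1, Finset.erase_inter_erase, Finset.subset_erase, hxC, not_false_eq_true,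
    and_true]

lemma isType2_erase_iff (hxC : x ∉ C) :
    IsType2 (fun m => (H m).erase x) n C ↔ IsType2 H n C := by
  simp only [IsType2, Finset.subset_erase, hxC, not_false_eq_true, and_true]
  exact and_congr_right' <| and_congr_right' <| forall₂_congr fun D hD =>
    not_congr (isType1_erase_iff fun h => hxC (hD h))

lemma qpCircuit_erase_iff (hxC : x ∉ C) :
    QPCircuit (fun m => (H m).erase x) n C ↔ QPCircuit H n C := by
  have h1 := fun D (hD : D ⊆ C) => isType1_erase_iff (H := H) (n := n) fun h => hxC (hD h)
  have h2 := fun D (hD : D ⊆ C) => isType2_erase_iff (H := H) (n := n) fun h => hxC (hD h)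
  simp only [QPCircuit, IsType3, isType1_erase_iff hxC, isType2_erase_iff hxC]
  exact or_congr Iff.rfl <| or_congr Iff.rfl <| and_congr_right' <|
    and_congr (forall₂_congr fun D hD => not_congr (h1 D hD))
      (forall₂_congr fun D hD => not_congr (h2 D hD))

lemma sum_card_inter_erase_lt (hx : x ∈ H i ∩ H j) :
    ∑ p : Fin k × Fin k, ((H p.1).erase x ∩ (H p.2).erase x).card <
      ∑ p : Fin k × Fin k, (H p.1 ∩ H p.2).card := by
  simp only [Finset.erase_inter_erase]
  exact Finset.sum_lt_sum (fun p _ => Finset.card_le_card (Finset.erase_subset _ _))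
    ⟨(i, j), Finset.mem_univ _, Finset.card_erase_lt_of_mem hx⟩

end Hypergraph

namespace Matroid

variable {α : Type*} [DecidableEq α]

def IsQuasiPavingOf {k : ℕ} (M : Matroid α) (H : Fin k → Finset α) (n : ℕ) : Prop :=
  ∀ S : Set α, M.Indep S ↔ S ⊆ M.E ∧ ∀ C : Finset α, ↑C ⊆ S → ¬ QPCircuit H n C

def IsTamePaving (M : Matroid α) (n : ℕ) : Prop :=
  ∃ (k : ℕ) (H : Fin k → Finset α), (∀ i, ↑(H i) ⊆ M.E) ∧
    (∀ i j, i ≠ j → (H i ∩ H j).card ≤ n - 2) ∧ TripleFree H ∧ M.IsQuasiPavingOf H n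

namespace IsQuasiPavingOf

variable {k n : ℕ} {H : Fin k → Finset α} {M : Matroid α} {A C : Finset α} {I : Set α}
  {i j : Fin k} {x y : α}

lemma not_indep (hM : M.IsQuasiPavingOf H n) (hC : QPCircuit H n C) : ¬ M.Indep ↑C :=
  fun h => ((hM _).1 h).2 C subset_rfl hC

lemma two_le (hM : M.IsQuasiPavingOf H n) (hij : i ≠ j) : 2 ≤ n := by
  by_contra! hn
  exact hM.not_indep (C := ∅) (.inl ⟨by simp; omega, i, j, hij, Finset.empty_subset _⟩)
    (by simp)

lemma indep_of_card_le (hM : M.IsQuasiPavingOf H n) (hn : 2 ≤ n) (hAE : ↑A ⊆ M.E)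
    (hA : A.card ≤ n - 2) : M.Indep ↑A := by
  refine (hM _).2 ⟨hAE, fun C hCA hC => ?_⟩
  have := Finset.card_le_card (Finset.coe_subset.1 hCA)
  rcases hC with ⟨h, -⟩ | ⟨h, -⟩ | ⟨h, -⟩ <;> omega

lemma not_indep_of_card_eq (hM : M.IsQuasiPavingOf H n) (hA : A.card = n + 1) :
    ¬ M.Indep ↑A := fun hind => by
  have hno := ((hM _).1 hind).2
  exact hno A subset_rfl (.inr (.inr ⟨hA, fun D hD h => hno D (Finset.coe_subset.2 hD) (.inl h),
    fun D hD h => hno D (Finset.coe_subset.2 hD) (.inr (.inl h))⟩))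

lemma inter_subset_closure (hM : M.IsQuasiPavingOf H n) (hn : 2 ≤ n)
    (hHE : ∀ i, ↑(H i) ⊆ M.E) (hij : i ≠ j) (hA : A ⊆ H i ∩ H j)
    (hAcard : A.card = n - 2) :
    ↑(H i ∩ H j) ⊆ M.closure ↑A := by
  have hAi : M.Indep ↑A := hM.indep_of_card_le hn
    (fun y hy => hHE i (Finset.mem_inter.1 (hA hy)).1) hAcard.le
  intro y hy
  by_cases hyA : y ∈ A
  · exact M.subset_closure _ hAi.subset_ground hyA
  refine hAi.mem_closure_of_not_indep_insert (hHE i (Finset.mem_inter.1 hy).1) ?_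
  rw [← Finset.coe_insert]
  refine hM.not_indep (.inl ⟨?_, i, j, hij, Finset.insert_subset hy hA⟩)
  rw [Finset.card_insert_of_notMem hyA]
  omega

lemma inter_subset_closure_of_mem_closure (hM : M.IsQuasiPavingOf H n) (hTF : TripleFree H)
    (hHE : ∀ i, ↑(H i) ⊆ M.E) (hij : i ≠ j) (hx : x ∈ H i ∩ H j) (hI : M.Indep I)
    (hxI : x ∉ I) (hxcl : x ∈ M.closure I) : ↑(H i ∩ H j) ⊆ M.closure I := by
  have hn := hM.two_le hij
  obtain ⟨C, hCI, hC⟩ : ∃ C : Finset α, ↑C ⊆ insert x I ∧ QPCircuit H n C := by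
    have hdep := (hI.mem_closure_iff_of_notMem hxI).1 hxcl
    by_contra! h
    exact hdep.not_indep ((hM _).2 ⟨hdep.subset_ground, h⟩)
  have hxC : x ∈ C := by
    by_contra hxC
    exact hM.not_indep hC (hI.subset fun y hy => (hCI hy).resolve_left fun h => hxC (h ▸ hy))
  have hCxI : ↑(C.erase x) ⊆ I := by
    rw [Finset.coe_erase]
    exact sdiff_singleton_subset_iff.2 hCI
  have hJ : M.Indep ↑(C.erase x) := hI.subset hCxI
  -- Whatever the type of the circuit `C ∋ x`, already `C.erase x` spans `H i ∩ H j`.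
  refine Set.Subset.trans ?_ (M.closure_subset_closure hCxI)
  rcases hC with ⟨hcard, a, b, hab, hCab⟩ | hC
  · rw [hTF.inter_eq hij hab hx (hCab hxC)] at hCab
    exact hM.inter_subset_closure hn hHE hij ((Finset.erase_subset _ _).trans hCab)
      (by rw [Finset.card_erase_of_mem hxC, hcard]; rfl)
  intro y hy
  by_cases hyCx : y ∈ C.erase x
  · exact M.subset_closure _ hJ.subset_ground hyCx
  refine hJ.mem_closure_of_not_indep_insert (hHE i (Finset.mem_inter.1 hy).1) ?_
  rw [← Finset.coe_insert]
  rcases hC with hC | ⟨hcard, -, -⟩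
  · obtain rfl | hyx := eq_or_ne y x
    · rw [Finset.insert_erase hxC]
      exact hM.not_indep (.inr (.inl hC))
    · exact hM.not_indep (.inr (.inl (hTF.isType2_insert_erase hij hx hy
        (fun h => hyCx (Finset.mem_erase.2 ⟨hyx, h⟩)) hC hxC)))
  · refine hM.not_indep_of_card_eq ?_
    rw [Finset.card_insert_of_notMem hyCx, Finset.card_erase_of_mem hxC, hcard,
      Nat.add_sub_cancel]

lemma delete (hM : M.IsQuasiPavingOf H n) (x : α) :
    (M ＼ {x}).IsQuasiPavingOf (fun m => (H m).erase x) n := by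
  intro S
  rw [deleteElem_indep_iff, hM S, delete_ground]
  constructor
  · rintro ⟨⟨hSE, hno⟩, hxS⟩
    exact ⟨subset_sdiff_singleton hSE hxS, fun C hCS hC =>
      hno C hCS ((qpCircuit_erase_iff fun h => hxS (hCS h)).1 hC)⟩
  · rintro ⟨hSE, hno⟩
    have hxS : x ∉ S := fun h => (hSE h).2 rfl
    exact ⟨⟨hSE.trans sdiff_subset, fun C hCS hC =>
      hno C hCS ((qpCircuit_erase_iff fun h => hxS (hCS h)).2 hC)⟩, hxS⟩

lemma principalExtStep_delete (hM : M.IsQuasiPavingOf H n) (hTF : TripleFree H)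
    (hHE : ∀ i, ↑(H i) ⊆ M.E) (hij : i ≠ j) (hbig : n - 2 < (H i ∩ H j).card)
    (hx : x ∈ H i ∩ H j) : PrincipalExtStep n (M ＼ {x}) M := by
  have hn := hM.two_le hij
  obtain ⟨A, hA, hAcard⟩ := Finset.exists_subset_card_eq (s := (H i ∩ H j).erase x)
    (n := n - 2) (by rw [Finset.card_erase_of_mem hx]; omega)
  have hAP : A ⊆ H i ∩ H j := hA.trans (Finset.erase_subset _ _)
  exact Matroid.principalExtStep_delete
    (hM.indep_of_card_le hn (fun y hy => hHE i (Finset.mem_inter.1 (hAP hy)).1) hAcard.le)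
    A.finite_toSet (by rw [ncard_coe_finset, hAcard])
    (fun h => (Finset.mem_erase.1 (hA h)).1 rfl)
    (hM.inter_subset_closure hn hHE hij hAP hAcard hx)
    fun I hI hxI hxcl => (Finset.coe_subset.2 hAP).trans
      (hM.inter_subset_closure_of_mem_closure hTF hHE hij hx hI hxI hxcl)

end IsQuasiPavingOf

end Matroid

lemma PrincipalExtStep.exists_isBase_ncard {α : Type*} {n r : ℕ} {M₁ M₂ : Matroid α}
    (hstep : PrincipalExtStep n M₁ M₂) (h : ∃ B, M₂.IsBase B ∧ B.ncard = r) :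
    ∃ B, M₁.IsBase B ∧ B.ncard = r := by
  obtain ⟨B, hB, rfl⟩ := h
  obtain ⟨_, _, -, -, -, -, hbases⟩ := hstep
  obtain ⟨B₁, hB₁⟩ := M₁.exists_isBase
  exact ⟨B₁, hB₁, ((hbases B₁).2 (.inl hB₁)).ncard_eq_ncard_of_isBase hB⟩

theorem Matroid.IsQuasiPavingOf.exists_isTamePaving_reflTransGen {α : Type*} [DecidableEq α]
    {k n : ℕ} {H : Fin k → Finset α} {M : Matroid α} (hM : M.IsQuasiPavingOf H n)
    (hTF : TripleFree H) (hHE : ∀ i, ↑(H i) ⊆ M.E)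
    (hrank : ∃ B, M.IsBase B ∧ B.ncard = n) :
    ∃ M₀ : Matroid α, M₀.IsTamePaving n ∧ (∃ B, M₀.IsBase B ∧ B.ncard = n) ∧
      Relation.ReflTransGen (PrincipalExtStep n) M₀ M := by
  induction hN : ∑ p : Fin k × Fin k, (H p.1 ∩ H p.2).card using Nat.strong_induction_on
    generalizing M H with
  | _ N ih =>
  by_cases htame : ∀ i j, i ≠ j → (H i ∩ H j).card ≤ n - 2
  · exact ⟨M, ⟨k, H, hHE, htame, hTF, hM⟩, hrank, .refl⟩
  push Not at htame
  obtain ⟨i, j, hij, hbig⟩ := htame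
  obtain ⟨x, hx⟩ := Finset.card_pos.1 (by omega : 0 < (H i ∩ H j).card)
  have hstep := hM.principalExtStep_delete hTF hHE hij hbig hx
  obtain ⟨M₀, hM₀, hrank₀, hseq⟩ := ih _ (hN ▸ sum_card_inter_erase_lt hx) (hM.delete x)
    (hTF.erase x) (fun m => by rw [Finset.coe_erase]; exact sdiff_subset_sdiff_left (hHE m))
    (hstep.exists_isBase_ncard hrank) rfl
  exact ⟨M₀, hM₀, hrank₀, hseq.tail hstep⟩

theorem statement16_general {d n : ℕ} (M : Matroid (Fin d))
    (hE : M.E = Set.univ)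
    (hqp : ∃ (k : ℕ) (H : Fin k → Finset (Fin d)), TripleFree H ∧
      ∀ S : Set (Fin d), M.Indep S ↔
        ∀ C : Finset (Fin d), ↑C ⊆ S → ¬ QPCircuit H n C)
    (hrank : ∃ B : Set (Fin d), M.IsBase B ∧ B.ncard = n) :
    ∃ M₀ : Matroid (Fin d),
      (∃ (k : ℕ) (H : Fin k → Finset (Fin d)),
        (∀ i : Fin k, ↑(H i) ⊆ M₀.E) ∧
        (∀ i j : Fin k, i ≠ j → (H i ∩ H j).card ≤ n - 2) ∧
        TripleFree H ∧
        (∀ S : Set (Fin d), M₀.Indep S ↔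
          (S ⊆ M₀.E ∧ ∀ C : Finset (Fin d), ↑C ⊆ S → ¬ QPCircuit H n C))) ∧
      (∃ B : Set (Fin d), M₀.IsBase B ∧ B.ncard = n) ∧
      Relation.ReflTransGen (PrincipalExtStep n) M₀ M := by
  obtain ⟨k, H, hTF, hInd⟩ := hqp
  have hM : M.IsQuasiPavingOf H n := fun S => by simp [hInd, hE]
  exact hM.exists_isTamePaving_reflTransGen hTF (fun i => hE ▸ subset_univ _) hrank

/-- Every `n`-quasi-paving matroid of rank `n` (on a finite ground
set) is obtained from a tame paving matroid of rank `n` — i.e. the quasi-paving matroid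
of a hypergraph whose pairwise intersections have size at most `n - 2` and any three of
whose members meet trivially — by a finite sequence of principal extensions along flats
of rank `n - 2`. -/
theorem statement16 {d n : ℕ} (hn : 0 < n) (hnd : n ≤ d) (M : Matroid (Fin d))
    (hE : M.E = Set.univ)
    (hqp : ∃ (k : ℕ) (H : Fin k → Finset (Fin d)), TripleFree H ∧
      ∀ S : Set (Fin d), M.Indep S ↔
        ∀ C : Finset (Fin d), ↑C ⊆ S → ¬ QPCircuit H n C)
    (hrank : ∃ B : Set (Fin d), M.IsBase B ∧ B.ncard = n) :
    ∃ M₀ : Matroid (Fin d),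
      (∃ (k : ℕ) (H : Fin k → Finset (Fin d)),
        (∀ i : Fin k, ↑(H i) ⊆ M₀.E) ∧
        (∀ i j : Fin k, i ≠ j → (H i ∩ H j).card ≤ n - 2) ∧
        TripleFree H ∧
        (∀ S : Set (Fin d), M₀.Indep S ↔
          (S ⊆ M₀.E ∧ ∀ C : Finset (Fin d), ↑C ⊆ S → ¬ QPCircuit H n C))) ∧
      (∃ B : Set (Fin d), M₀.IsBase B ∧ B.ncard = n) ∧
      Relation.ReflTransGen (PrincipalExtStep n) M₀ M :=
  statement16_general M hE hqp hrank
end
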